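/- Assume the Verblunsky coefficients satisfy the decay hypothesis (1.5). Then for every ε ∈ (0,b) there is a constant C_ε > 0 such that for all n ≥ 1 and all z with |z| ≤ b − ε, |Φ_n(z) − S(z) · Σ_{ℓ=1}^L conj(C_ℓ) conj(b_ℓ)^n (z − conj(b_ℓ))^{-1}| ≤ C_ε · n · (max(bΔ, b², b−ε))^n. In particular, b^{-n}[Φ_n(z) − S(z) Σ_{ℓ=1}^L conj(C_ℓ) (conj(b_ℓ)/b)^n b^n (z − conj(b_ℓ))^{-1}] → 0 uniformly on {|z| ≤ b − ε}. -/

import Mathlib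

open Polynomial Filter Topology

/-- The monic orthogonal polynomials on the unit circle, defined by the Szegő
recursion `Φ₀ = 1`, `Φ_{n+1}(z) = z Φ_n(z) - conj(α_n) Φ_n^*(z)`, where the reversed
polynomial is `P^*(z) = Σ_{j=0}^n conj(c_{n-j}) z^j`. -/
noncomputable def PhiP (α : ℕ → ℂ) : ℕ → Polynomial ℂ
  | 0 => 1
  | n + 1 => X * PhiP α n -
      Polynomial.C ((starRingEnd ℂ) (α n)) *
        Polynomial.reflect n (Polynomial.map (starRingEnd ℂ) (PhiP α n))

/-- The reversed polynomial `Φ_n^*(z) = z^n conj(Φ_n(1/conj z))`. -/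
noncomputable def PhiStarP (α : ℕ → ℂ) (n : ℕ) : Polynomial ℂ :=
  Polynomial.reflect n (Polynomial.map (starRingEnd ℂ) (PhiP α n))

/-!
Unrolling the Szegő recursion gives `Φₙ(z) = zⁿ - ∑_{k<n} z^(n-1-k) conj(αₖ) Φₖ*(z)`.
Write `conj αₖ = βₖ + eₖ` with `βₖ = ∑_ℓ conj(C_ℓ) conj(b_ℓ)^k` and `|eₖ| ≤ A (bΔ)^k`, and
`Φₖ*(z) = S(z) + O(b^k)` (the steps of `Φₖ*` are `O(|αₖ|) = O(b^k)`). The term `S(z) βₖ` sums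
to `S(z) ∑_ℓ conj(C_ℓ) (conj(b_ℓ)ⁿ - zⁿ) / (conj(b_ℓ) - z)`, which is the claimed main term up to
`O(|z|ⁿ)`; each of the remaining `n` terms is `O(q^(n-1))` with `q = max(bΔ, b², b - ε)`, and
`q < b` gives the uniform convergence after division by `bⁿ`.
-/

open ComplexConjugate

theorem reflect_succ_reflect {R : Type*} [Semiring R] {p : R[X]} {n : ℕ} (h : p.natDegree ≤ n) :
    reflect (n + 1) (reflect n p) = X * p := by
  rw [← reflect_reflect (N := n + 1) (p := X * p), add_comm,
    reflect_mul X p natDegree_X_le h, reflect_one_X, one_mul]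

section Szego

variable (α : ℕ → ℂ)

theorem natDegree_PhiP_le (n : ℕ) : (PhiP α n).natDegree ≤ n := by
  induction n with
  | zero => simp [PhiP]
  | succ n ih =>
    have hstar : (reflect n ((PhiP α n).map (starRingEnd ℂ))).natDegree ≤ n :=
      natDegree_reflect_le.trans (max_le le_rfl (natDegree_map_le.trans ih))
    refine (natDegree_sub_le _ _).trans (max_le ?_ ?_)
    · exact natDegree_mul_le.trans (by rw [natDegree_X]; omega)
    · exact (natDegree_C_mul_le _ _).trans (hstar.trans n.le_succ)

theorem PhiStarP_succ (n : ℕ) :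
    PhiStarP α (n + 1) = PhiStarP α n - C (α n) * (X * PhiP α n) := by
  have hconj : (PhiStarP α n).map (starRingEnd ℂ) = reflect n (PhiP α n) := by
    rw [PhiStarP, ← reflect_map, Polynomial.map_map,
      show (starRingEnd ℂ).comp (starRingEnd ℂ) = RingHom.id ℂ from RingHom.ext Complex.conj_conj,
      Polynomial.map_id]
  rw [PhiStarP, PhiP, Polynomial.map_sub, Polynomial.map_mul, Polynomial.map_mul, map_C, map_X,
    ← PhiStarP, hconj, reflect_sub, reflect_C_mul, starRingEnd_self_apply,
    reflect_succ_reflect (natDegree_PhiP_le α n), add_comm, reflect_mul X _ natDegree_X_le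
    (natDegree_map_le.trans (natDegree_PhiP_le α n)), reflect_one_X, one_mul, PhiStarP]

theorem eval_PhiP_succ (n : ℕ) (z : ℂ) :
    (PhiP α (n + 1)).eval z =
      z * (PhiP α n).eval z - conj (α n) * (PhiStarP α n).eval z := by
  simp [PhiP, PhiStarP]

theorem eval_PhiStarP_succ (n : ℕ) (z : ℂ) :
    (PhiStarP α (n + 1)).eval z = (PhiStarP α n).eval z - α n * (z * (PhiP α n).eval z) := by
  simp [PhiStarP_succ]

theorem eval_PhiP_eq_sub_sum (n : ℕ) (z : ℂ) :
    (PhiP α n).eval z = z ^ n - ∑ k ∈ Finset.range n,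
      z ^ (n - 1 - k) * (conj (α k) * (PhiStarP α k).eval z) := by
  induction n with
  | zero => simp [PhiP]
  | succ n ih =>
    have hshift : ∑ k ∈ Finset.range n, z ^ (n - k) * (conj (α k) * (PhiStarP α k).eval z)
        = z * ∑ k ∈ Finset.range n,
          z ^ (n - 1 - k) * (conj (α k) * (PhiStarP α k).eval z) := by
      rw [Finset.mul_sum]
      refine Finset.sum_congr rfl fun k hk => ?_
      rw [show n - k = n - 1 - k + 1 by grind, pow_succ']
      ring
    rw [eval_PhiP_succ, ih, Finset.sum_range_succ, Nat.add_sub_cancel, Nat.sub_self, pow_zero,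
      one_mul, hshift]
    ring

theorem norm_eval_PhiP_le_prod {z : ℂ} (hz : ‖z‖ ≤ 1) (n : ℕ) :
    ‖(PhiP α n).eval z‖ ≤ ∏ k ∈ Finset.range n, (1 + ‖α k‖) ∧
      ‖(PhiStarP α n).eval z‖ ≤ ∏ k ∈ Finset.range n, (1 + ‖α k‖) := by
  induction n with
  | zero => simp [PhiP, PhiStarP]
  | succ n ih =>
    obtain ⟨hΦ, hΦstar⟩ := ih
    have hzΦ : ‖z * (PhiP α n).eval z‖ ≤ ∏ k ∈ Finset.range n, (1 + ‖α k‖) := by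
      rw [norm_mul]
      exact (mul_le_of_le_one_left (norm_nonneg _) hz).trans hΦ
    rw [Finset.prod_range_succ, mul_one_add, eval_PhiP_succ, eval_PhiStarP_succ]
    constructor
    · refine (norm_sub_le _ _).trans (add_le_add hzΦ ?_)
      rw [norm_mul, Complex.norm_conj, mul_comm]
      exact mul_le_mul_of_nonneg_right hΦstar (norm_nonneg _)
    · refine (norm_sub_le _ _).trans (add_le_add hΦstar ?_)
      rw [norm_mul, mul_comm]
      exact mul_le_mul_of_nonneg_right hzΦ (norm_nonneg _)

theorem norm_eval_PhiP_le_exp {c b : ℝ} (hb0 : 0 ≤ b) (hb1 : b < 1)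
    (hα : ∀ n, ‖α n‖ ≤ c * b ^ n) {z : ℂ} (hz : ‖z‖ ≤ 1) (n : ℕ) :
    ‖(PhiP α n).eval z‖ ≤ Real.exp (c / (1 - b)) ∧
      ‖(PhiStarP α n).eval z‖ ≤ Real.exp (c / (1 - b)) := by
  have hc : 0 ≤ c := by simpa using (norm_nonneg _).trans (hα 0)
  have hprod : ∏ k ∈ Finset.range n, (1 + ‖α k‖) ≤ Real.exp (c / (1 - b)) := calc
    _ ≤ Real.exp (∑ k ∈ Finset.range n, ‖α k‖) :=
      Real.prod_one_add_le_exp_sum _ fun _ => norm_nonneg _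
    _ ≤ Real.exp (c * (1 / (1 - b))) := by
      gcongr
      calc ∑ k ∈ Finset.range n, ‖α k‖ ≤ ∑ k ∈ Finset.range n, c * b ^ k :=
            Finset.sum_le_sum fun k _ => hα k
        _ ≤ c * (1 / (1 - b)) := by
          rw [← Finset.mul_sum, Finset.range_eq_Ico]
          gcongr
          simpa using geom_sum_Ico_le_of_lt_one (m := 0) (n := n) hb0 hb1
    _ = Real.exp (c / (1 - b)) := by rw [mul_one_div]
  obtain ⟨hΦ, hΦstar⟩ := norm_eval_PhiP_le_prod α hz n
  exact ⟨hΦ.trans hprod, hΦstar.trans hprod⟩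

theorem norm_eval_PhiStarP_sub_le {c b : ℝ} (hb0 : 0 ≤ b) (hb1 : b < 1)
    (hα : ∀ n, ‖α n‖ ≤ c * b ^ n) {z s : ℂ} (hz : ‖z‖ ≤ 1)
    (hs : Tendsto (fun n => (PhiStarP α n).eval z) atTop (𝓝 s)) (n : ℕ) :
    ‖(PhiStarP α n).eval z - s‖ ≤ c * Real.exp (c / (1 - b)) / (1 - b) * b ^ n := by
  have hstep : ∀ k, dist ((PhiStarP α k).eval z) ((PhiStarP α (k + 1)).eval z) ≤
      c * Real.exp (c / (1 - b)) * b ^ k := by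
    intro k
    rw [dist_eq_norm, eval_PhiStarP_succ, sub_sub_cancel, norm_mul, norm_mul, mul_right_comm]
    have hc : 0 ≤ c * b ^ k := (norm_nonneg _).trans (hα k)
    gcongr
    · exact hα k
    · exact (mul_le_of_le_one_left (norm_nonneg _) hz).trans
        (norm_eval_PhiP_le_exp α hb0 hb1 hα hz k).1
  rw [← dist_eq_norm, div_mul_eq_mul_div]
  exact dist_le_of_le_geometric_of_tendsto _ _ hb1 hstep hs n

theorem norm_le_of_tendsto_eval_PhiStarP {c b : ℝ} (hb0 : 0 ≤ b) (hb1 : b < 1)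
    (hα : ∀ n, ‖α n‖ ≤ c * b ^ n) {z s : ℂ} (hz : ‖z‖ ≤ 1)
    (hs : Tendsto (fun n => (PhiStarP α n).eval z) atTop (𝓝 s)) :
    ‖s‖ ≤ Real.exp (c / (1 - b)) :=
  le_of_tendsto' hs.norm fun n => (norm_eval_PhiP_le_exp α hb0 hb1 hα hz n).2

end Szego

theorem sum_pow_mul_sum_mul_pow {K ι : Type*} [Field K] [Fintype ι] (c w : ι → K) {z : K}
    (hw : ∀ i, w i ≠ z) (n : ℕ) :
    ∑ k ∈ Finset.range n, z ^ (n - 1 - k) * ∑ i, c i * w i ^ k =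
      ∑ i, c i * ((w i ^ n - z ^ n) / (w i - z)) := by
  simp_rw [Finset.mul_sum]
  rw [Finset.sum_comm]
  refine Finset.sum_congr rfl fun i _ => ?_
  rw [← (Commute.all _ _).geom_sum₂ (hw i), Finset.mul_sum]
  exact Finset.sum_congr rfl fun k _ => by ring

theorem pow_sub_sum_pow_mul_sub_eq {K ι : Type*} [Field K] [Fintype ι] (a P : ℕ → K)
    (c w : ι → K) {s z : K} (hw : ∀ i, w i ≠ z) (n : ℕ) :
    z ^ n - ∑ k ∈ Finset.range n, z ^ (n - 1 - k) * (a k * P k) -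
        s * ∑ i, c i * w i ^ n * (z - w i)⁻¹ =
      z ^ n * (1 + s * ∑ i, c i * (w i - z)⁻¹) -
        ∑ k ∈ Finset.range n, z ^ (n - 1 - k) *
          ((a k - ∑ i, c i * w i ^ k) * P k + (∑ i, c i * w i ^ k) * (P k - s)) := by
  have hsplit : ∑ k ∈ Finset.range n, z ^ (n - 1 - k) * (a k * P k) =
      ∑ k ∈ Finset.range n, z ^ (n - 1 - k) *
          ((a k - ∑ i, c i * w i ^ k) * P k + (∑ i, c i * w i ^ k) * (P k - s)) +
        s * ∑ k ∈ Finset.range n, z ^ (n - 1 - k) * ∑ i, c i * w i ^ k := by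
    rw [Finset.mul_sum, ← Finset.sum_add_distrib]
    exact Finset.sum_congr rfl fun k _ => by ring
  have hpole : ∑ i, (c i * ((w i ^ n - z ^ n) / (w i - z)) + c i * w i ^ n * (z - w i)⁻¹) =
      -(z ^ n * ∑ i, c i * (w i - z)⁻¹) := by
    rw [Finset.mul_sum, ← Finset.sum_neg_distrib]
    refine Finset.sum_congr rfl fun i _ => ?_
    have := sub_ne_zero.2 (hw i)
    rw [← neg_sub (w i), inv_neg]
    field_simp
    ring
  rw [Finset.sum_add_distrib] at hpole
  rw [hsplit, sum_pow_mul_sum_mul_pow c w hw]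
  linear_combination (-s) * hpole

theorem norm_sum_pow_mul_le {𝕜 : Type*} [NormedDivisionRing 𝕜] {z : 𝕜} {q D : ℝ} (hz : ‖z‖ ≤ q)
    {x : ℕ → 𝕜} (hx : ∀ k, ‖x k‖ ≤ D * q ^ k) (n : ℕ) :
    ‖∑ k ∈ Finset.range n, z ^ (n - 1 - k) * x k‖ ≤ n * D * q ^ (n - 1) := by
  have hq : 0 ≤ q := (norm_nonneg z).trans hz
  refine (norm_sum_le _ _).trans ?_
  refine (Finset.sum_le_card_nsmul _ _ (D * q ^ (n - 1)) fun k hk => ?_).trans_eq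
    (by rw [Finset.card_range, nsmul_eq_mul, mul_assoc])
  calc ‖z ^ (n - 1 - k) * x k‖ ≤ q ^ (n - 1 - k) * (D * q ^ k) := by
        rw [norm_mul, norm_pow]
        gcongr
        exact hx k
    _ = D * q ^ (n - 1) := by
        rw [mul_left_comm, ← pow_add, Nat.sub_add_cancel]
        exact Nat.le_sub_one_of_lt (Finset.mem_range.1 hk)

theorem tendstoUniformlyOn_div_pow_of_norm_le {X : Type*} {f : ℕ → X → ℂ} {s : Set X}
    {C q b : ℝ} (hq : 0 ≤ q) (hqb : q < b)
    (hf : ∀ n, 1 ≤ n → ∀ x ∈ s, ‖f n x‖ ≤ C * n * q ^ n) :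
    TendstoUniformlyOn (fun n x => f n x / (b : ℂ) ^ n) 0 atTop s := by
  have hb : 0 < b := hq.trans_lt hqb
  have hlim : Tendsto (fun n : ℕ => C * (n * (q / b) ^ n)) atTop (𝓝 0) := by
    simpa using (tendsto_self_mul_const_pow_of_lt_one (div_nonneg hq hb.le)
      ((div_lt_one hb).2 hqb)).const_mul C
  rw [Metric.tendstoUniformlyOn_iff]
  intro δ hδ
  filter_upwards [hlim.eventually (gt_mem_nhds hδ), eventually_ge_atTop 1] with n hn hn1 x hx
  rw [Pi.zero_apply, dist_zero_left, norm_div, norm_pow, Complex.norm_real,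
    Real.norm_of_nonneg hb.le]
  calc ‖f n x‖ / b ^ n ≤ C * n * q ^ n / b ^ n := by gcongr; exact hf n hn1 x hx
    _ = C * (n * (q / b) ^ n) := by rw [div_pow]; ring
    _ < δ := hn

theorem norm_eval_PhiP_sub_le (α : ℕ → ℂ) {ι : Type*} [Fintype ι] (c w : ι → ℂ) {s z : ℂ}
    {ε q M D : ℝ} (hε : 0 < ε) (hq : 0 < q) (hz : ‖z‖ ≤ q) (hw : ∀ i, ε ≤ ‖w i - z‖)
    (hs : ‖s‖ ≤ M)
    (hx : ∀ k, ‖(conj (α k) - ∑ i, c i * w i ^ k) * (PhiStarP α k).eval z +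
      (∑ i, c i * w i ^ k) * ((PhiStarP α k).eval z - s)‖ ≤ D * q ^ k)
    {n : ℕ} (hn : 1 ≤ n) :
    ‖(PhiP α n).eval z - s * ∑ i, c i * w i ^ n * (z - w i)⁻¹‖ ≤
      (1 + M * (∑ i, ‖c i‖) / ε + D / q) * n * q ^ n := by
  have hw0 : ∀ i, w i ≠ z := fun i h => by
    have := hw i
    rw [h, sub_self, norm_zero] at this
    linarith
  have hpole : ‖∑ i, c i * (w i - z)⁻¹‖ ≤ (∑ i, ‖c i‖) / ε := by
    rw [Finset.sum_div]
    refine (norm_sum_le _ _).trans (Finset.sum_le_sum fun i _ => ?_)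
    rw [norm_mul, norm_inv, div_eq_mul_inv]
    gcongr
    exact hw i
  have hM : 0 ≤ M := (norm_nonneg s).trans hs
  have hmain : ‖z ^ n * (1 + s * ∑ i, c i * (w i - z)⁻¹)‖ ≤
      (1 + M * (∑ i, ‖c i‖) / ε) * q ^ n := by
    rw [norm_mul, norm_pow, mul_comm, mul_div_assoc]
    gcongr
    refine (norm_add_le _ _).trans ?_
    rw [norm_one, norm_mul]
    gcongr
  have hrem := norm_sum_pow_mul_le hz hx n
  rw [pow_sub₀ q hq.ne' hn, pow_one] at hrem
  have hn' : (1 : ℝ) ≤ n := by exact_mod_cast hn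
  rw [eval_PhiP_eq_sub_sum, pow_sub_sum_pow_mul_sub_eq _ _ c w hw0]
  calc _ ≤ (1 + M * (∑ i, ‖c i‖) / ε) * q ^ n + n * D * (q ^ n * q⁻¹) :=
        (norm_sub_le _ _).trans (add_le_add hmain hrem)
    _ ≤ (1 + M * (∑ i, ‖c i‖) / ε) * q ^ n * n + n * D * (q ^ n * q⁻¹) :=
        add_le_add (le_mul_of_one_le_right (by positivity) hn') le_rfl
    _ = _ := by ring

section Decay

variable {ι : Type*} [Fintype ι] {b : ℝ} {bs Cs : ι → ℂ}

theorem norm_sum_mul_pow_le (habs : ∀ ℓ, ‖bs ℓ‖ ≤ b) (n : ℕ) :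
    ‖∑ ℓ, Cs ℓ * bs ℓ ^ n‖ ≤ (∑ ℓ, ‖Cs ℓ‖) * b ^ n := by
  rw [Finset.sum_mul]
  refine (norm_sum_le _ _).trans (Finset.sum_le_sum fun ℓ _ => ?_)
  rw [norm_mul, norm_pow]
  gcongr
  exact habs ℓ

theorem norm_le_of_decay {α : ℕ → ℂ} {Δ A : ℝ} (hb0 : 0 ≤ b) (habs : ∀ ℓ, ‖bs ℓ‖ ≤ b)
    (hΔ0 : 0 ≤ Δ) (hΔ1 : Δ ≤ 1) (hA : 0 ≤ A)
    (hdecay : ∀ n, ‖α n - ∑ ℓ, Cs ℓ * bs ℓ ^ n‖ ≤ A * (b * Δ) ^ n) (n : ℕ) :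
    ‖α n‖ ≤ (A + ∑ ℓ, ‖Cs ℓ‖) * b ^ n := calc
  ‖α n‖ ≤ ‖∑ ℓ, Cs ℓ * bs ℓ ^ n‖ + ‖α n - ∑ ℓ, Cs ℓ * bs ℓ ^ n‖ :=
      norm_le_norm_add_norm_sub' _ _
  _ ≤ (∑ ℓ, ‖Cs ℓ‖) * b ^ n + A * b ^ n := by
      gcongr
      · exact norm_sum_mul_pow_le habs n
      · exact (hdecay n).trans (by gcongr; exact mul_le_of_le_one_right hb0 hΔ1)
  _ = (A + ∑ ℓ, ‖Cs ℓ‖) * b ^ n := by ring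

theorem norm_conj_sub_mul_add_le_of_decay {α : ℕ → ℂ} {Δ A M K q : ℝ} (hA : 0 ≤ A) (hK : 0 ≤ K)
    (habs : ∀ ℓ, ‖bs ℓ‖ ≤ b)
    (hdecay : ∀ n, ‖α n - ∑ ℓ, Cs ℓ * bs ℓ ^ n‖ ≤ A * (b * Δ) ^ n)
    (hbΔ : 0 ≤ b * Δ) (hbΔq : b * Δ ≤ q) (hb2q : b ^ 2 ≤ q) {P s : ℂ} {k : ℕ}
    (hP : ‖P‖ ≤ M) (hPs : ‖P - s‖ ≤ K * b ^ k) :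
    ‖(conj (α k) - ∑ ℓ, conj (Cs ℓ) * conj (bs ℓ) ^ k) * P +
        (∑ ℓ, conj (Cs ℓ) * conj (bs ℓ) ^ k) * (P - s)‖ ≤
      (A * M + (∑ ℓ, ‖Cs ℓ‖) * K) * q ^ k := by
  have hconj : ∑ ℓ, conj (Cs ℓ) * conj (bs ℓ) ^ k = conj (∑ ℓ, Cs ℓ * bs ℓ ^ k) := by
    simp only [map_sum, map_mul, map_pow]
  have hM : 0 ≤ M := (norm_nonneg P).trans hP
  rw [hconj, ← map_sub]
  calc _ ≤ A * (b * Δ) ^ k * M + (∑ ℓ, ‖Cs ℓ‖) * b ^ k * (K * b ^ k) := by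
        refine (norm_add_le _ _).trans ?_
        rw [norm_mul, norm_mul, Complex.norm_conj, Complex.norm_conj]
        have hβ := norm_sum_mul_pow_le (Cs := Cs) habs k
        exact add_le_add
          (mul_le_mul (hdecay k) hP (norm_nonneg _) ((norm_nonneg _).trans (hdecay k)))
          (mul_le_mul hβ hPs (norm_nonneg _) ((norm_nonneg _).trans hβ))
    _ = A * M * (b * Δ) ^ k + (∑ ℓ, ‖Cs ℓ‖) * K * (b ^ 2) ^ k := by ring
    _ ≤ A * M * q ^ k + (∑ ℓ, ‖Cs ℓ‖) * K * q ^ k := by gcongr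
    _ = (A * M + (∑ ℓ, ‖Cs ℓ‖) * K) * q ^ k := by ring

end Decay

theorem exists_norm_eval_PhiP_sub_le_of_decay (α : ℕ → ℂ) {ι : Type*} [Fintype ι] {b Δ A : ℝ}
    {bs Cs : ι → ℂ} (hb0 : 0 < b) (hb1 : b < 1) (habs : ∀ ℓ, ‖bs ℓ‖ = b) (hΔ0 : 0 < Δ)
    (hΔ1 : Δ < 1) (hA : 0 < A)
    (hdecay : ∀ n, ‖α n - ∑ ℓ, Cs ℓ * bs ℓ ^ n‖ ≤ A * (b * Δ) ^ n) {S : ℂ → ℂ}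
    (hS : ∀ z : ℂ, ‖z‖ ≤ 1 → Tendsto (fun n => (PhiStarP α n).eval z) atTop (𝓝 (S z)))
    {ε : ℝ} (hε : 0 < ε) (hεb : ε < b) :
    ∃ Cε : ℝ, 0 < Cε ∧ ∀ n : ℕ, 1 ≤ n → ∀ z : ℂ, ‖z‖ ≤ b - ε →
      ‖(PhiP α n).eval z - S z * ∑ ℓ, conj (Cs ℓ) * conj (bs ℓ) ^ n * (z - conj (bs ℓ))⁻¹‖ ≤
        Cε * n * max (b * Δ) (max (b ^ 2) (b - ε)) ^ n := by
  set c := A + ∑ ℓ, ‖Cs ℓ‖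
  set M := Real.exp (c / (1 - b))
  set K := c * M / (1 - b)
  set q := max (b * Δ) (max (b ^ 2) (b - ε))
  have hαb := norm_le_of_decay hb0.le (fun ℓ => (habs ℓ).le) hΔ0.le hΔ1.le hA.le hdecay
  have hq0 : 0 < q := lt_max_of_lt_right (lt_max_of_lt_right (by linarith))
  have hK : 0 ≤ K := div_nonneg (by positivity) (by linarith)
  refine ⟨1 + M * (∑ ℓ, ‖conj (Cs ℓ)‖) / ε + (A * M + (∑ ℓ, ‖Cs ℓ‖) * K) / q, by positivity,
    fun n hn z hz => ?_⟩
  have hz1 : ‖z‖ ≤ 1 := by linarith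
  refine norm_eval_PhiP_sub_le α _ _ hε hq0 (hz.trans (le_max_of_le_right (le_max_right _ _)))
    (fun ℓ => ?_) (norm_le_of_tendsto_eval_PhiStarP α hb0.le hb1 hαb hz1 (hS z hz1))
    (fun k => ?_) hn
  · have := norm_sub_norm_le (conj (bs ℓ)) z
    rw [Complex.norm_conj, habs] at this
    linarith
  · exact norm_conj_sub_mul_add_le_of_decay hA.le hK (fun ℓ => (habs ℓ).le) hdecay
      (by positivity) (le_max_left _ _) (le_max_of_le_right (le_max_left _ _))
      (norm_eval_PhiP_le_exp α hb0.le hb1 hαb hz1 k).2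
      (norm_eval_PhiStarP_sub_le α hb0.le hb1 hαb hz1 (hS z hz1) k)

theorem stmt_7_general (α : ℕ → ℂ)
    (L : ℕ) (b Δ A : ℝ) (bs Cs : Fin L → ℂ)
    (hb0 : 0 < b) (hb1 : b < 1)
    (habs : ∀ ℓ, ‖bs ℓ‖ = b)
    (hΔ0 : 0 < Δ) (hΔ1 : Δ < 1) (hA : 0 < A)
    (hdecay : ∀ n : ℕ,
      ‖α n - ∑ ℓ : Fin L, Cs ℓ * bs ℓ ^ n‖ ≤ A * (b * Δ) ^ n)
    (S : ℂ → ℂ)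
    (hS : ∀ z : ℂ, ‖z‖ < 1 / b →
      Tendsto (fun n : ℕ => (PhiStarP α n).eval z) atTop (nhds (S z)))
 :
    ∀ ε : ℝ, 0 < ε → ε < b →
      (∃ Cε : ℝ, 0 < Cε ∧ ∀ n : ℕ, 1 ≤ n → ∀ z : ℂ, ‖z‖ ≤ b - ε →
        ‖(PhiP α n).eval z -
            S z * ∑ ℓ : Fin L, (starRingEnd ℂ) (Cs ℓ) * ((starRingEnd ℂ) (bs ℓ)) ^ n *
              (z - (starRingEnd ℂ) (bs ℓ))⁻¹‖ ≤
          Cε * n * max (b * Δ) (max (b ^ 2) (b - ε)) ^ n) ∧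
      TendstoUniformlyOn
        (fun (n : ℕ) (z : ℂ) =>
          ((PhiP α n).eval z -
            S z * ∑ ℓ : Fin L, (starRingEnd ℂ) (Cs ℓ) * ((starRingEnd ℂ) (bs ℓ)) ^ n *
              (z - (starRingEnd ℂ) (bs ℓ))⁻¹) / (b : ℂ) ^ n)
        0 atTop {z : ℂ | ‖z‖ ≤ b - ε} := by
  intro ε hε hεb
  have hS1 : ∀ z : ℂ, ‖z‖ ≤ 1 → Tendsto (fun n => (PhiStarP α n).eval z) atTop (𝓝 (S z)) :=
    fun z hz => hS z (hz.trans_lt (by rw [lt_div_iff₀ hb0]; linarith))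
  obtain ⟨Cε, hCε, hbound⟩ :=
    exists_norm_eval_PhiP_sub_le_of_decay α hb0 hb1 habs hΔ0 hΔ1 hA hdecay hS1 hε hεb
  have hqb : max (b * Δ) (max (b ^ 2) (b - ε)) < b :=
    max_lt (by nlinarith) (max_lt (by nlinarith) (by linarith))
  exact ⟨⟨Cε, hCε, hbound⟩, tendstoUniformlyOn_div_pow_of_norm_le (by positivity) hqb hbound⟩

theorem stmt_7 (α : ℕ → ℂ) (hα : ∀ n, ‖α n‖ < 1)
    (L : ℕ) (hL : 1 ≤ L) (b Δ A : ℝ) (bs Cs : Fin L → ℂ)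
    (hb0 : 0 < b) (hb1 : b < 1) (hinj : Function.Injective bs)
    (habs : ∀ ℓ, ‖bs ℓ‖ = b) (hCs : ∀ ℓ, Cs ℓ ≠ 0)
    (hΔ0 : 0 < Δ) (hΔ1 : Δ < 1) (hA : 0 < A)
    (hdecay : ∀ n : ℕ,
      ‖α n - ∑ ℓ : Fin L, Cs ℓ * bs ℓ ^ n‖ ≤ A * (b * Δ) ^ n)
    (S : ℂ → ℂ)
    (hS : ∀ z : ℂ, ‖z‖ < 1 / b →
      Tendsto (fun n : ℕ => (PhiStarP α n).eval z) atTop (nhds (S z)))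
 :
    ∀ ε : ℝ, 0 < ε → ε < b →
      (∃ Cε : ℝ, 0 < Cε ∧ ∀ n : ℕ, 1 ≤ n → ∀ z : ℂ, ‖z‖ ≤ b - ε →
        ‖(PhiP α n).eval z -
            S z * ∑ ℓ : Fin L, (starRingEnd ℂ) (Cs ℓ) * ((starRingEnd ℂ) (bs ℓ)) ^ n *
              (z - (starRingEnd ℂ) (bs ℓ))⁻¹‖ ≤
          Cε * n * max (b * Δ) (max (b ^ 2) (b - ε)) ^ n) ∧
      TendstoUniformlyOn
        (fun (n : ℕ) (z : ℂ) =>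
          ((PhiP α n).eval z -
            S z * ∑ ℓ : Fin L, (starRingEnd ℂ) (Cs ℓ) * ((starRingEnd ℂ) (bs ℓ)) ^ n *
              (z - (starRingEnd ℂ) (bs ℓ))⁻¹) / (b : ℂ) ^ n)
        0 atTop {z : ℂ | ‖z‖ ≤ b - ε} :=
  stmt_7_general α L b Δ A bs Cs hb0 hb1 habs hΔ0 hΔ1 hA hdecay S hS
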